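/- arXiv:2402.12009 — 2 statements merged into one kernel-verified Lean document; each statement's English description precedes it below -/
import Mathlib

section
/- Let φ belong to the class Φ, let (D,d) be a compact metric space, and let I : D → ℝ be a Lipschitz function on (D, d_φ), i.e., there is K > 0 with |I(a) − I(b)| ≤ K φ(d(a,b)) for all a,b ∈ D. Then there exists a₀ ∈ D such that the standard index I_{a₀} := (b ↦ φ(d(a₀,b))) is a best uniform approximation to I among standard indices: sup_{b∈D} |I(b) − φ(d(a₀,b))| = inf_{a∈D} sup_{b∈D} |I(b) − φ(d(a,b))|. -/
/-!
Since `φ` is continuous with `φ 0 = 0`, the Lipschitz bound makes `I` continuous, so the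
deviation `(a, b) ↦ |I b - φ (d(a,b))|` is jointly continuous on the compact space `D × D`.
Its supremum over `b` is then a continuous function of `a`, and a continuous function on a
compact space attains its infimum.
-/

open Filter Set Topology

theorem continuous_of_abs_sub_le_mul_comp_dist {X : Type*} [PseudoMetricSpace X] {φ : ℝ → ℝ}
    (h0 : φ 0 = 0) (hφ : ContinuousWithinAt φ (Ici 0) 0) {f : X → ℝ} {K : ℝ}
    (hf : ∀ x y, |f x - f y| ≤ K * φ (dist x y)) : Continuous f := by
  refine continuous_iff_continuousAt.2 fun y => tendsto_iff_dist_tendsto_zero.2 ?_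
  have hdist : Tendsto (fun x => dist x y) (𝓝 y) (𝓝[Ici 0] 0) :=
    tendsto_nhdsWithin_iff.2
      ⟨tendsto_iff_dist_tendsto_zero.1 tendsto_id, .of_forall fun _ => dist_nonneg⟩
  have hbound : Tendsto (fun x => K * φ (dist x y)) (𝓝 y) (𝓝 0) := by
    simpa [h0] using (hφ.tendsto.comp hdist).const_mul K
  exact squeeze_zero (fun _ => dist_nonneg)
    (fun x => (hf x y).trans_eq' (Real.dist_eq _ _)) hbound

theorem continuous_iSup_of_continuous_uncurry {α β γ : Type*}
    [ConditionallyCompleteLinearOrder α] [TopologicalSpace α] [OrderTopology α]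
    [TopologicalSpace β] [CompactSpace β] [TopologicalSpace γ] {f : γ → β → α}
    (hf : Continuous ↿f) : Continuous fun x => ⨆ y, f x y := by
  simpa only [iSup, ← image_univ] using isCompact_univ.continuous_sSup hf

theorem Continuous.exists_eq_ciInf {α β : Type*} [ConditionallyCompleteLinearOrder α]
    [TopologicalSpace α] [ClosedIicTopology α] [TopologicalSpace β] [CompactSpace β]
    [Nonempty β] {g : β → α} (hg : Continuous g) : ∃ x, g x = ⨅ x, g x :=
  (isCompact_range hg).sInf_mem (range_nonempty g)

theorem best_approximation_standard_index_general
    {D : Type*} [MetricSpace D] [CompactSpace D] [Nonempty D] (φ : ℝ → ℝ)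
    (h0 : φ 0 = 0)
    (hcont : ContinuousOn φ (Set.Ici (0 : ℝ)))
    (I : D → ℝ) (K : ℝ)
    (hI : ∀ a b : D, |I a - I b| ≤ K * φ (dist a b)) :
    ∃ a₀ : D, (⨆ b : D, |I b - φ (dist a₀ b)|)
      = ⨅ a : D, ⨆ b : D, |I b - φ (dist a b)| := by
  have hIcont : Continuous I :=
    continuous_of_abs_sub_le_mul_comp_dist h0 (hcont 0 self_mem_Ici) hI
  have hindex : Continuous fun p : D × D => φ (dist p.1 p.2) :=
    hcont.comp_continuous continuous_dist fun _ => dist_nonneg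
  have hdev : Continuous fun p : D × D => |I p.2 - φ (dist p.1 p.2)| :=
    ((hIcont.comp continuous_snd).sub hindex).abs
  exact (continuous_iSup_of_continuous_uncurry hdev).exists_eq_ciInf

/-- **best approximation by standard indices.** For `φ ∈ Φ`, `(D,d)` a
compact metric space and `I : D → ℝ` Lipschitz with respect to `d_φ`, there exists
`a₀ ∈ D` whose standard index `b ↦ φ(d(a₀,b))` is a best uniform approximation to
`I` among all standard indices. -/
theorem best_approximation_standard_index
    {D : Type*} [MetricSpace D] [CompactSpace D] [Nonempty D] (φ : ℝ → ℝ)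
    (hnn : ∀ x : ℝ, 0 ≤ x → 0 ≤ φ x)
    (hsub : ∀ x y : ℝ, 0 ≤ x → 0 ≤ y → φ (x + y) ≤ φ x + φ y)
    (hmono : ∀ x y : ℝ, 0 ≤ x → x < y → φ x < φ y)
    (h0 : φ 0 = 0)
    (hcont : ContinuousOn φ (Set.Ici (0 : ℝ)))
    (I : D → ℝ) (K : ℝ) (hK : 0 < K)
    (hI : ∀ a b : D, |I a - I b| ≤ K * φ (dist a b)) :
    ∃ a₀ : D, (⨆ b : D, |I b - φ (dist a₀ b)|)
      = ⨅ a : D, ⨆ b : D, |I b - φ (dist a b)| :=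
  best_approximation_standard_index_general φ h0 hcont I K hI
end

section
/- Let φ belong to the class Φ, let (D,d) be a compact metric space, and let K, Q > 0 satisfy KQ ≥ 1. Let I : D → ℝ be a nonnegative function such that: |I(a) − I(b)| ≤ K φ(d(a,b)) for all a,b ∈ D; ((1+KQ)/K)·inf I + φ(d(a,b)) ≤ Q(I(a) + I(b)) for all a,b ∈ D; and sup_{a∈D} |I(a)| ≤ C for some C > 0. Then there exists a sequence {a_n} in D such that for every b ∈ D the limit lim_n φ(d(a_n,b)) exists, and I(b) ≤ inf I + K·lim_n φ(d(a_n,b)) ≤ KQ·I(b) for every b ∈ D. -/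
open Filter Topology

/-- **approximation by standard indices.** Let `φ ∈ Φ`, `(D,d)` a
compact metric space, `K, Q > 0` with `KQ ≥ 1`, and `I : D → ℝ` nonnegative,
`φ`-coherent for `K`, satisfying the strengthened normalisation
`((1+KQ)/K)·inf I + φ(d(a,b)) ≤ Q(I a + I b)` and bounded by `C`. Then there is a
sequence `{a_n} ⊆ D` such that for every `b ∈ D` the limit `lim_n φ(d(a_n,b))`
exists and `I b ≤ inf I + K·lim_n φ(d(a_n,b)) ≤ KQ·I b`. -/
theorem approximation_by_standard_indices
    {D : Type*} [MetricSpace D] [CompactSpace D] [Nonempty D] (φ : ℝ → ℝ)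
    (hnn : ∀ x : ℝ, 0 ≤ x → 0 ≤ φ x)
    (hsub : ∀ x y : ℝ, 0 ≤ x → 0 ≤ y → φ (x + y) ≤ φ x + φ y)
    (hmono : ∀ x y : ℝ, 0 ≤ x → x < y → φ x < φ y)
    (h0 : φ 0 = 0)
    (hcont : ContinuousOn φ (Set.Ici (0 : ℝ)))
    (K Q C : ℝ) (hK : 0 < K) (hQ : 0 < Q) (hKQ : 1 ≤ K * Q) (hC : 0 < C)
    (I : D → ℝ) (hIpos : ∀ a : D, 0 ≤ I a)
    (hcoh : ∀ a b : D, |I a - I b| ≤ K * φ (dist a b))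
    (hnorm : ∀ a b : D,
      ((1 + K * Q) / K) * (⨅ c : D, I c) + φ (dist a b) ≤ Q * (I a + I b))
    (hbd : ∀ a : D, |I a| ≤ C) :
    ∃ a : ℕ → D, ∀ b : D, ∃ l : ℝ,
      Tendsto (fun n => φ (dist (a n) b)) atTop (𝓝 l) ∧
      I b ≤ (⨅ c : D, I c) + K * l ∧ (⨅ c : D, I c) + K * l ≤ K * Q * I b := by

  -- `I` is continuous
  have hφt : Tendsto φ (𝓝[Set.Ici (0:ℝ)] 0) (𝓝 0) := by
    have := hcont 0 (Set.self_mem_Ici)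
    simpa [h0, ContinuousWithinAt] using this
  have hIc : Continuous I := by
    rw [continuous_iff_continuousAt]
    intro b
    have hd : Tendsto (fun a : D => dist a b) (𝓝 b) (𝓝[Set.Ici (0:ℝ)] 0) := by
      apply tendsto_nhdsWithin_of_tendsto_nhds_of_eventually_within
      · have : Tendsto (fun a : D => dist a b) (𝓝 b) (𝓝 (dist b b)) :=
          (Continuous.dist continuous_id continuous_const).tendsto b
        simpa using this
      · exact Filter.Eventually.of_forall fun a => dist_nonneg
    have hφd : Tendsto (fun a : D => φ (dist a b)) (𝓝 b) (𝓝 0) := hφt.comp hd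
    have hsq : Tendsto (fun a : D => |I a - I b|) (𝓝 b) (𝓝 0) := by
      apply squeeze_zero (fun a => abs_nonneg _) (fun a => hcoh a b)
      have : Tendsto (fun a : D => K * φ (dist a b)) (𝓝 b) (𝓝 (K * 0)) :=
        hφd.const_mul K
      simpa using this
    rw [ContinuousAt, tendsto_iff_dist_tendsto_zero]
    simpa [Real.dist_eq] using hsq
  -- minimizer
  obtain ⟨a₀, -, ha₀⟩ := (isCompact_univ (X := D)).exists_isMinOn
    Set.univ_nonempty (hIc.continuousOn)
  have hmin : ∀ c : D, I a₀ ≤ I c := fun c => ha₀ (Set.mem_univ c)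
  have hinf : (⨅ c : D, I c) = I a₀ := by
    apply le_antisymm
    · exact ciInf_le ⟨0, fun x ⟨c, hc⟩ => hc ▸ hIpos c⟩ a₀
    · exact le_ciInf hmin
  refine ⟨fun _ => a₀, fun b => ⟨φ (dist a₀ b), tendsto_const_nhds, ?_, ?_⟩⟩
  · have := hcoh b a₀
    rw [dist_comm b a₀] at this
    have h1 : I b - I a₀ ≤ K * φ (dist a₀ b) := by
      exact le_trans (le_abs_self _) this
    rw [hinf]; linarith
  · have := hnorm a₀ b
    rw [hinf]
    have hKne : K ≠ 0 := ne_of_gt hK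
    have h2 : (1 + K * Q) * I a₀ + K * φ (dist a₀ b) ≤ K * Q * (I a₀ + I b) := by
      have := mul_le_mul_of_nonneg_left this (le_of_lt hK)
      calc (1 + K * Q) * I a₀ + K * φ (dist a₀ b)
          = K * ((1 + K * Q) / K * I a₀ + φ (dist a₀ b)) := by
            field_simp
        _ ≤ K * (Q * (I a₀ + I b)) := by rwa [hinf] at this
        _ = K * Q * (I a₀ + I b) := by ring
    nlinarith [hIpos a₀]
end
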